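/- arXiv:1708.06168 — 6 statements merged into one kernel-verified Lean document; each statement's English description precedes it below -/
import Mathlib

section
/- Let p, P be continuous on an open interval (a,b) (possibly infinite) with P(x) ≥ p(x) on (a,b) and P ≢ p. Suppose u is a solution of u'' + p u = 0 that is positive on (a,b) and satisfies ∫_a^{x₀} dx/u² = ∞ and ∫_{x₀}^b dx/u² = ∞ for some interior point x₀. Then every solution v of v'' + P v = 0 has a zero in (a,b). -/
open MeasureTheory Set

/-!
Suppose `v` has no zero in `(a, b)`; replacing `v` by `-v` we may take `v > 0`. The Wronskian
`W = v' u - v u'` satisfies `W' = (p - P) u v ≤ 0`, with strict inequality where `P ≠ p`, so `W`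
is antitone and not identically zero, and `(v / u)' = W / u²`. If `W c < 0`, then beyond `c` the
positive function `v / u` decreases at least like `W c * ∫_c^x u⁻²`, so `∫^b u⁻² < ∞`; if
`W c > 0`, the same argument run leftwards gives `∫_a u⁻² < ∞`. Either way `u` would not be
principal at one of the endpoints.
-/

theorem setLIntegral_le_of_forall_Ioc {μ : Measure ℝ} [SFinite μ] {f : ℝ → ENNReal} {S : Set ℝ}
    (hS : OrdConnected S) {c : ℝ} {M : ENNReal} (hSc : S ⊆ Ioi c)
    (h : ∀ y ∈ S, ∫⁻ x in Ioc c y, f x ∂μ ≤ M) : ∫⁻ x in S, f x ∂μ ≤ M := by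
  have hmono : Monotone fun y : S => Ioc c (y : ℝ) := fun _ _ hy => Ioc_subset_Ioc_right hy
  calc ∫⁻ x in S, f x ∂μ ≤ ∫⁻ x in ⋃ y : S, Ioc c (y : ℝ), f x ∂μ :=
        lintegral_mono_set fun z hz => mem_iUnion.2 ⟨⟨z, hz⟩, hSc hz, le_rfl⟩
    _ = ⨆ y : S, ∫⁻ x in Ioc c (y : ℝ), f x ∂μ := by
        simp only [← withDensity_apply' f]
        exact hmono.measure_iUnion
    _ ≤ M := iSup_le fun y => h y y.2

theorem sub_le_mul_integral_of_hasDerivAt_mul {r W g : ℝ → ℝ} {c y : ℝ} (hcy : c ≤ y)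
    (hr : ∀ x ∈ Icc c y, HasDerivAt r (W x * g x) x) (hW : AntitoneOn W (Icc c y))
    (hg : ContinuousOn g (Icc c y)) (hg₀ : ∀ x ∈ Icc c y, 0 ≤ g x) :
    r y - r c ≤ W c * ∫ x in c..y, g x := by
  rw [← uIcc_of_le hcy] at hr hg
  have hWg : IntervalIntegrable (fun x => W x * g x) volume c y :=
    (uIcc_of_le hcy ▸ hW).intervalIntegrable.mul_continuousOn hg
  calc r y - r c = ∫ x in c..y, W x * g x :=
        (intervalIntegral.integral_eq_sub_of_hasDerivAt hr hWg).symm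
    _ ≤ ∫ x in c..y, W c * g x :=
        intervalIntegral.integral_mono_on hcy hWg (hg.intervalIntegrable.const_mul _) fun x hx =>
          mul_le_mul_of_nonneg_right (hW (left_mem_Icc.2 hcy) hx hx.1) (hg₀ x hx)
    _ = W c * ∫ x in c..y, g x := intervalIntegral.integral_const_mul _ _

section Comparison

variable {I : Set ℝ} {r W g : ℝ → ℝ}

theorem setLIntegral_inter_Ioi_lt_top_of_hasDerivAt_mul (hI : OrdConnected I)
    (hr_pos : ∀ x ∈ I, 0 < r x) (hr : ∀ x ∈ I, HasDerivAt r (W x * g x) x)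
    (hW : AntitoneOn W I) (hg : ContinuousOn g I) (hg₀ : ∀ x ∈ I, 0 ≤ g x) {c d : ℝ}
    (hc : c ∈ I) (hd : d ∈ I) (hWc : W c < 0) :
    ∫⁻ x in I ∩ Ioi d, ENNReal.ofReal (g x) < ⊤ := by
  -- `0 < r y ≤ r c + W c * ∫_c^y g` bounds `∫_c^y g` uniformly in `y`.
  have hbound : ∫⁻ x in I ∩ Ioi c, ENNReal.ofReal (g x) ≤ ENNReal.ofReal (r c / -W c) := by
    refine setLIntegral_le_of_forall_Ioc (hI.inter ordConnected_Ioi) inter_subset_right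
      fun y ⟨hy, hcy⟩ => ?_
    have hIcc := hI.out hc hy
    rw [← ofReal_integral_eq_lintegral_ofReal
        ((hg.mono hIcc).integrableOn_Icc.mono_set Ioc_subset_Icc_self)
        (ae_restrict_of_forall_mem measurableSet_Ioc fun x hx =>
          hg₀ x (hIcc (Ioc_subset_Icc_self hx))),
      ← intervalIntegral.integral_of_le hcy.le]
    refine ENNReal.ofReal_le_ofReal ((le_div_iff₀ (neg_pos.2 hWc)).2 ?_)
    have := sub_le_mul_integral_of_hasDerivAt_mul hcy.le (fun x hx => hr x (hIcc hx))
      (hW.mono hIcc) (hg.mono hIcc) fun x hx => hg₀ x (hIcc hx)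
    nlinarith [hr_pos y hy]
  have hIcc := hI.out hd hc
  calc ∫⁻ x in I ∩ Ioi d, ENNReal.ofReal (g x)
      ≤ ∫⁻ x in Icc d c ∪ I ∩ Ioi c, ENNReal.ofReal (g x) := by
        refine lintegral_mono_set fun x ⟨hx, hdx⟩ => ?_
        rcases le_or_gt x c with hxc | hcx
        exacts [Or.inl ⟨hdx.le, hxc⟩, Or.inr ⟨hx, hcx⟩]
    _ ≤ (∫⁻ x in Icc d c, ENNReal.ofReal (g x)) + ∫⁻ x in I ∩ Ioi c, ENNReal.ofReal (g x) :=
        lintegral_union_le _ _ _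
    _ < ⊤ := ENNReal.add_lt_top.2
        ⟨(hg.mono hIcc).integrableOn_Icc.lintegral_lt_top, hbound.trans_lt ENNReal.ofReal_lt_top⟩

theorem setLIntegral_inter_Iio_lt_top_of_hasDerivAt_mul (hI : OrdConnected I)
    (hr_pos : ∀ x ∈ I, 0 < r x) (hr : ∀ x ∈ I, HasDerivAt r (W x * g x) x)
    (hW : AntitoneOn W I) (hg : ContinuousOn g I) (hg₀ : ∀ x ∈ I, 0 ≤ g x) {c d : ℝ}
    (hc : c ∈ I) (hd : d ∈ I) (hWc : 0 < W c) :
    ∫⁻ x in I ∩ Iio d, ENNReal.ofReal (g x) < ⊤ := by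
  have hreflect := setLIntegral_inter_Ioi_lt_top_of_hasDerivAt_mul (I := Neg.neg ⁻¹' I)
    (r := fun x => r (-x)) (W := fun x => -W (-x)) (g := fun x => g (-x)) (c := -c) (d := -d)
    (hI.preimage_anti fun _ _ h => neg_le_neg h) (fun x hx => hr_pos _ hx)
    (fun x hx => ((hr _ hx).scomp x (hasDerivAt_neg x)).congr_deriv (by simp))
    (fun x hx y hy hxy => neg_le_neg (hW hy hx (neg_le_neg hxy)))
    (hg.comp continuousOn_neg fun _ hx => hx) (fun x hx => hg₀ _ hx)
    (by simpa using hc) (by simpa using hd) (by simpa using hWc)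
  rwa [show Neg.neg ⁻¹' I ∩ Ioi (-d) = Neg.neg ⁻¹' (I ∩ Iio d) by ext; simp,
    (Measure.measurePreserving_neg volume).setLIntegral_comp_preimage_emb
      measurableEmbedding_neg (fun x => ENNReal.ofReal (g x))] at hreflect

end Comparison

theorem hasDerivAt_wronskian {u u' v v' : ℝ → ℝ} {p P x : ℝ} (hu : HasDerivAt u (u' x) x)
    (hu' : HasDerivAt u' (-(p * u x)) x) (hv : HasDerivAt v (v' x) x)
    (hv' : HasDerivAt v' (-(P * v x)) x) :
    HasDerivAt (fun y => v' y * u y - v y * u' y) ((p - P) * (u x * v x)) x :=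
  ((hv'.mul hu).sub (hv.mul hu')).congr_deriv (by ring)

theorem exists_ne_zero_of_hasDerivAt {I : Set ℝ} {f : ℝ → ℝ} {f' z : ℝ} (hz : I ∈ nhds z)
    (hf : HasDerivAt f f' z) (hf' : f' ≠ 0) : ∃ c ∈ I, f c ≠ 0 := by
  by_contra! hzero
  have : HasDerivAt f 0 z :=
    (hasDerivAt_const z (0 : ℝ)).congr_of_eventuallyEq (Filter.mem_of_superset hz hzero)
  exact hf' (hf.unique this)

theorem exists_nonpos_of_majorant {I : Set ℝ} (hIo : IsOpen I) (hIc : OrdConnected I)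
    {p P u u' v v' : ℝ → ℝ} {x₀ : ℝ} (hx₀ : x₀ ∈ I)
    (hPp : ∀ x ∈ I, p x ≤ P x) (hne : ∃ x ∈ I, P x ≠ p x)
    (hu : ∀ x ∈ I, HasDerivAt u (u' x) x ∧ HasDerivAt u' (-(p x * u x)) x)
    (hupos : ∀ x ∈ I, 0 < u x)
    (hdiva : ∫⁻ x in I ∩ Iio x₀, ENNReal.ofReal (1 / (u x) ^ 2) = ⊤)
    (hdivb : ∫⁻ x in I ∩ Ioi x₀, ENNReal.ofReal (1 / (u x) ^ 2) = ⊤)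
    (hv : ∀ x ∈ I, HasDerivAt v (v' x) x ∧ HasDerivAt v' (-(P x * v x)) x) :
    ∃ x ∈ I, v x ≤ 0 := by
  by_contra! hvpos
  set W := fun y => v' y * u y - v y * u' y
  have hW : ∀ x ∈ I, HasDerivAt W ((p x - P x) * (u x * v x)) x := fun x hx =>
    hasDerivAt_wronskian (hu x hx).1 (hu x hx).2 (hv x hx).1 (hv x hx).2
  have hW_anti : AntitoneOn W I := by
    refine antitoneOn_of_hasDerivWithinAt_nonpos hIc.convex
      (fun x hx => (hW x hx).continuousAt.continuousWithinAt)
      (fun x hx => (hW x (interior_subset hx)).hasDerivWithinAt) fun x hx => ?_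
    have hx := interior_subset hx
    exact mul_nonpos_of_nonpos_of_nonneg (sub_nonpos.2 (hPp x hx))
      (mul_pos (hupos x hx) (hvpos x hx)).le
  have hquot : ∀ x ∈ I, HasDerivAt (fun y => v y / u y) (W x * (1 / u x ^ 2)) x := fun x hx =>
    (((hv x hx).1.div (hu x hx).1 (hupos x hx).ne')).congr_deriv (div_eq_mul_one_div _ _)
  have hg : ContinuousOn (fun x => 1 / u x ^ 2) I := fun x hx =>
    (continuousAt_const.div ((hu x hx).1.continuousAt.pow 2)
      (pow_pos (hupos x hx) 2).ne').continuousWithinAt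
  have hg₀ : ∀ x ∈ I, 0 ≤ 1 / u x ^ 2 := fun x _ => by positivity
  have hr_pos : ∀ x ∈ I, 0 < v x / u x := fun x hx => div_pos (hvpos x hx) (hupos x hx)
  obtain ⟨z, hz, hPz⟩ := hne
  obtain ⟨c, hc, hWc⟩ := exists_ne_zero_of_hasDerivAt (hIo.mem_nhds hz) (hW z hz)
    (mul_ne_zero (sub_ne_zero.2 hPz.symm) (mul_pos (hupos z hz) (hvpos z hz)).ne')
  rcases hWc.lt_or_gt with hWc | hWc
  · exact (setLIntegral_inter_Ioi_lt_top_of_hasDerivAt_mul hIc hr_pos hquot hW_anti hg hg₀ hc hx₀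
      hWc).ne hdivb
  · exact (setLIntegral_inter_Iio_lt_top_of_hasDerivAt_mul hIc hr_pos hquot hW_anti hg hg₀ hc hx₀
      hWc).ne hdiva

theorem singular_sturm_comparison_general (a b : EReal)
    (p P u v : ℝ → ℝ) (x₀ : ℝ)
    (I : Set ℝ) (hI : I = {x : ℝ | a < (x : EReal) ∧ (x : EReal) < b})
    (hx₀ : x₀ ∈ I)
    (hPp : ∀ x ∈ I, p x ≤ P x) (hne : ∃ x ∈ I, P x ≠ p x)
    (hu : ∀ x ∈ I, HasDerivAt u (deriv u x) x ∧ HasDerivAt (deriv u) (-(p x * u x)) x)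
    (hupos : ∀ x ∈ I, 0 < u x)
    (hdiva : ∫⁻ x in I ∩ Iio x₀, ENNReal.ofReal (1 / (u x) ^ 2) = ⊤)
    (hdivb : ∫⁻ x in I ∩ Ioi x₀, ENNReal.ofReal (1 / (u x) ^ 2) = ⊤)
    (hv : ∀ x ∈ I, HasDerivAt v (deriv v x) x ∧ HasDerivAt (deriv v) (-(P x * v x)) x) :
    ∃ x ∈ I, v x = 0 := by
  have hI_eq : I = Real.toEReal ⁻¹' Ioo a b := hI
  have hIo : IsOpen I := hI_eq ▸ isOpen_Ioo.preimage continuous_coe_real_ereal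
  have hIc : OrdConnected I := hI_eq ▸ ordConnected_Ioo.preimage_mono EReal.coe_strictMono.monotone
  obtain ⟨x₁, hx₁, hv₁⟩ := exists_nonpos_of_majorant hIo hIc hx₀ hPp hne hu hupos hdiva hdivb hv
  obtain ⟨x₂, hx₂, hv₂⟩ := exists_nonpos_of_majorant (v := fun x => -v x)
    (v' := fun x => -deriv v x) hIo hIc hx₀ hPp hne hu hupos hdiva hdivb
    fun x hx => ⟨(hv x hx).1.neg, (hv x hx).2.neg.congr_deriv (by ring)⟩
  have hsub := hIc.uIcc_subset hx₁ hx₂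
  obtain ⟨x, hx, hvx⟩ := intermediate_value_uIcc
    (fun x hx => (hv x (hsub hx)).1.continuousAt.continuousWithinAt)
    (mem_uIcc.2 (Or.inl ⟨hv₁, neg_nonpos.1 hv₂⟩) : (0 : ℝ) ∈ uIcc (v x₁) (v x₂))
  exact ⟨x, hsub hx, hvx⟩

/-- Singular Sturm comparison theorem on a possibly infinite open interval. -/
theorem singular_sturm_comparison (a b : EReal) (hab : a < b)
    (p P u v : ℝ → ℝ) (x₀ : ℝ)
    (I : Set ℝ) (hI : I = {x : ℝ | a < (x : EReal) ∧ (x : EReal) < b})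
    (hx₀ : x₀ ∈ I)
    (hp : ContinuousOn p I) (hP : ContinuousOn P I)
    (hPp : ∀ x ∈ I, p x ≤ P x) (hne : ∃ x ∈ I, P x ≠ p x)
    (hu : ∀ x ∈ I, HasDerivAt u (deriv u x) x ∧ HasDerivAt (deriv u) (-(p x * u x)) x)
    (hupos : ∀ x ∈ I, 0 < u x)
    (hdiva : ∫⁻ x in I ∩ Iio x₀, ENNReal.ofReal (1 / (u x) ^ 2) = ⊤)
    (hdivb : ∫⁻ x in I ∩ Ioi x₀, ENNReal.ofReal (1 / (u x) ^ 2) = ⊤)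
    (hv : ∀ x ∈ I, HasDerivAt v (deriv v x) x ∧ HasDerivAt (deriv v) (-(P x * v x)) x) :
    ∃ x ∈ I, v x = 0 :=
  singular_sturm_comparison_general a b p P u v x₀ I hI hx₀ hPp hne hu hupos hdiva hdivb hv
end

section
/- Let p be continuous on an open interval (a,b) (possibly infinite). If a solution u of u'' + p u = 0 is positive on (a,b) and satisfies ∫_a^{x₀} dx/u² = ∞ and ∫_{x₀}^b dx/u² = ∞, then every solution of the same equation that is linearly independent of u has a zero in (a,b). -/
/-!
Two solutions of `u'' + p u = 0` have a constant Wronskian `W = u w' - u' w`, and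
`(w / u)' = W / u²`. Hence `W · (w / u)(y) = W · (w / u)(x₀) + W² ∫_{x₀}^y u⁻²`; since `W ≠ 0` and
`∫ u⁻²` diverges towards both ends of the interval, `W · w / u` is negative somewhere to the left
of `x₀` and positive somewhere to the right, so `w` vanishes in between by the intermediate value
theorem. The divergence of the Lebesgue integral is turned into large interval integrals by
exhausting the open interval with intervals whose endpoints are rational.
-/

open MeasureTheory Set

theorem IsOpen.iUnion_Ioc_rat_eq {S : Set ℝ} (hS : IsOpen S) (hS' : S.OrdConnected) :
    ⋃ i : {qr : ℚ × ℚ // (qr.1 : ℝ) ∈ S ∧ (qr.2 : ℝ) ∈ S}, Ioc (i.1.1 : ℝ) i.1.2 = S := by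
  refine Subset.antisymm (iUnion_subset fun i => Ioc_subset_Icc_self.trans
    (hS'.out i.2.1 i.2.2)) fun x hx => ?_
  obtain ⟨l, r, ⟨hlx, hxr⟩, hlr⟩ := mem_nhds_iff_exists_Ioo_subset.1 (hS.mem_nhds hx)
  obtain ⟨q₁, hlq₁, hq₁x⟩ := exists_rat_btwn hlx
  obtain ⟨q₂, hxq₂, hq₂r⟩ := exists_rat_btwn hxr
  exact mem_iUnion.2 ⟨⟨(q₁, q₂), hlr ⟨hlq₁, hq₁x.trans hxr⟩, hlr ⟨hlx.trans hxq₂, hq₂r⟩⟩,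
    hq₁x, hxq₂.le⟩

theorem IsOpen.setLIntegral_eq_iSup_Ioc {S : Set ℝ} (hS : IsOpen S) (hS' : S.OrdConnected)
    (g : ℝ → ENNReal) :
    ∫⁻ x in S, g x = ⨆ c ∈ S, ⨆ d ∈ S, ∫⁻ x in Ioc c d, g x := by
  refine le_antisymm ?_ (iSup₂_le fun c hc => iSup₂_le fun d hd =>
    lintegral_mono_set (Ioc_subset_Icc_self.trans (hS'.out hc hd)))
  have hdir : Directed (· ⊆ ·)
      fun i : {qr : ℚ × ℚ // (qr.1 : ℝ) ∈ S ∧ (qr.2 : ℝ) ∈ S} => Ioc (i.1.1 : ℝ) i.1.2 := by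
    rintro ⟨⟨q₁, r₁⟩, hq₁, hr₁⟩ ⟨⟨q₂, r₂⟩, hq₂, hr₂⟩
    refine ⟨⟨(min q₁ q₂, max r₁ r₂), ?_, ?_⟩, ?_, ?_⟩
    · rcases min_choice q₁ q₂ with h | h <;> simpa [h]
    · rcases max_choice r₁ r₂ with h | h <;> simpa [h]
    · exact Ioc_subset_Ioc (by exact_mod_cast min_le_left _ _) (by exact_mod_cast le_max_left _ _)
    · exact Ioc_subset_Ioc (by exact_mod_cast min_le_right _ _)
        (by exact_mod_cast le_max_right _ _)
  conv_lhs => rw [← hS.iUnion_Ioc_rat_eq hS', setLIntegral_iUnion_of_directed g hdir]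
  exact iSup_le fun i => le_iSup₂_of_le (i.1.1 : ℝ) i.2.1 (le_iSup₂_of_le (i.1.2 : ℝ) i.2.2 le_rfl)

theorem exists_lt_intervalIntegral_of_setLIntegral_eq_top {S : Set ℝ} {f : ℝ → ℝ}
    (hS : IsOpen S) (hS' : S.OrdConnected) (hf : ContinuousOn f S) (hf0 : ∀ x ∈ S, 0 ≤ f x)
    (htop : ∫⁻ x in S, ENNReal.ofReal (f x) = ⊤) (M : ℝ) :
    ∃ c ∈ S, ∃ d ∈ S, c ≤ d ∧ M < ∫ x in c..d, f x := by
  have hM : ENNReal.ofReal M < ⨆ c ∈ S, ⨆ d ∈ S, ∫⁻ x in Ioc c d, ENNReal.ofReal (f x) := by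
    rw [← hS.setLIntegral_eq_iSup_Ioc hS', htop]
    exact ENNReal.ofReal_lt_top
  simp only [lt_iSup_iff] at hM
  obtain ⟨c, hc, d, hd, hlt⟩ := hM
  have hcd : c ≤ d := by
    by_contra! hdc
    simp [Ioc_eq_empty_of_le hdc.le] at hlt
  have hsub : Icc c d ⊆ S := hS'.out hc hd
  rw [← ofReal_integral_eq_lintegral_ofReal
    ((hf.mono hsub).integrableOn_Icc.mono_set Ioc_subset_Icc_self)
    (ae_restrict_of_forall_mem measurableSet_Ioc fun x hx => hf0 x (hsub (Ioc_subset_Icc_self hx)))]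
    at hlt
  exact ⟨c, hc, d, hd, hcd, by
    simpa only [intervalIntegral.integral_of_le hcd] using (ENNReal.ofReal_lt_ofReal_iff'.1 hlt).1⟩

theorem exists_lt_intervalIntegral_of_setLIntegral_Iio_eq_top {I : Set ℝ} {f : ℝ → ℝ} {x₀ : ℝ}
    (hI : IsOpen I) (hI' : I.OrdConnected) (hx₀ : x₀ ∈ I) (hf : ContinuousOn f I)
    (hf0 : ∀ x ∈ I, 0 ≤ f x) (htop : ∫⁻ x in I ∩ Iio x₀, ENNReal.ofReal (f x) = ⊤) (M : ℝ) :
    ∃ c ∈ I, M < ∫ x in c..x₀, f x := by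
  obtain ⟨c, hc, d, hd, hcd, hM⟩ := exists_lt_intervalIntegral_of_setLIntegral_eq_top
    (hI.inter isOpen_Iio) (hI'.inter ordConnected_Iio) (hf.mono inter_subset_left)
    (fun x hx => hf0 x hx.1) htop M
  refine ⟨c, hc.1, hM.trans_le (intervalIntegral.integral_mono_interval le_rfl hcd hd.2.le ?_
    (hf.mono (hI'.uIcc_subset hc.1 hx₀)).intervalIntegrable)⟩
  exact ae_restrict_of_forall_mem measurableSet_Ioc fun x hx =>
    hf0 x (hI'.out hc.1 hx₀ (Ioc_subset_Icc_self hx))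

theorem exists_lt_intervalIntegral_of_setLIntegral_Ioi_eq_top {I : Set ℝ} {f : ℝ → ℝ} {x₀ : ℝ}
    (hI : IsOpen I) (hI' : I.OrdConnected) (hx₀ : x₀ ∈ I) (hf : ContinuousOn f I)
    (hf0 : ∀ x ∈ I, 0 ≤ f x) (htop : ∫⁻ x in I ∩ Ioi x₀, ENNReal.ofReal (f x) = ⊤) (M : ℝ) :
    ∃ d ∈ I, M < ∫ x in x₀..d, f x := by
  obtain ⟨c, hc, d, hd, hcd, hM⟩ := exists_lt_intervalIntegral_of_setLIntegral_eq_top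
    (hI.inter isOpen_Ioi) (hI'.inter ordConnected_Ioi) (hf.mono inter_subset_left)
    (fun x hx => hf0 x hx.1) htop M
  refine ⟨d, hd.1, hM.trans_le (intervalIntegral.integral_mono_interval hc.2.le hcd le_rfl ?_
    (hf.mono (hI'.uIcc_subset hx₀ hd.1)).intervalIntegrable)⟩
  exact ae_restrict_of_forall_mem measurableSet_Ioc fun x hx =>
    hf0 x (hI'.out hx₀ hd.1 (Ioc_subset_Icc_self hx))

noncomputable def wronskian (u w : ℝ → ℝ) (x : ℝ) : ℝ :=
  u x * deriv w x - deriv u x * w x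

def IsSolutionOn (p : ℝ → ℝ) (I : Set ℝ) (u : ℝ → ℝ) : Prop :=
  ∀ x ∈ I, HasDerivAt u (deriv u x) x ∧ HasDerivAt (deriv u) (-(p x * u x)) x

theorem IsSolutionOn.continuousOn {p u : ℝ → ℝ} {I : Set ℝ} (hu : IsSolutionOn p I u) :
    ContinuousOn u I :=
  fun x hx => (hu x hx).1.continuousAt.continuousWithinAt

theorem IsSolutionOn.hasDerivAt_wronskian {p u w : ℝ → ℝ} {I : Set ℝ} (hu : IsSolutionOn p I u)
    (hw : IsSolutionOn p I w) {x : ℝ} (hx : x ∈ I) : HasDerivAt (wronskian u w) 0 x :=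
  (((hu x hx).1.mul (hw x hx).2).sub ((hu x hx).2.mul (hw x hx).1)).congr_deriv (by ring)

theorem IsSolutionOn.wronskian_eq {p u w : ℝ → ℝ} {I : Set ℝ} (hu : IsSolutionOn p I u)
    (hw : IsSolutionOn p I w) (hI : IsOpen I) (hI' : IsPreconnected I) {x y : ℝ}
    (hx : x ∈ I) (hy : y ∈ I) : wronskian u w x = wronskian u w y :=
  hI.is_const_of_deriv_eq_zero hI'
    (fun _ hz => (hu.hasDerivAt_wronskian hw hz).differentiableAt.differentiableWithinAt)
    (fun _ hz => (hu.hasDerivAt_wronskian hw hz).deriv) hx hy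

theorem hasDerivAt_div_eq_wronskian_div_sq {u w : ℝ → ℝ} {x : ℝ}
    (hu : HasDerivAt u (deriv u x) x) (hw : HasDerivAt w (deriv w x) x) (hx : u x ≠ 0) :
    HasDerivAt (fun t => w t / u t) (wronskian u w x / u x ^ 2) x :=
  (hw.div hu hx).congr_deriv (by rw [wronskian]; ring)

theorem IsSolutionOn.div_eq_add_wronskian_mul_integral {p u w : ℝ → ℝ} {I : Set ℝ}
    (hu : IsSolutionOn p I u) (hw : IsSolutionOn p I w) (hI : IsOpen I) (hI' : I.OrdConnected)
    (hu0 : ∀ x ∈ I, u x ≠ 0) {x y : ℝ} (hx : x ∈ I) (hy : y ∈ I) :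
    w y / u y = w x / u x + wronskian u w x * ∫ t in x..y, 1 / u t ^ 2 := by
  have hsub : uIcc x y ⊆ I := hI'.uIcc_subset hx hy
  -- `(w / u)' = W / u²`, and the Wronskian `W` is constant on `I`
  have hderiv : ∀ t ∈ uIcc x y,
      HasDerivAt (fun t => w t / u t) (wronskian u w x * (1 / u t ^ 2)) t := fun t ht => by
    have h := hasDerivAt_div_eq_wronskian_div_sq (hu t (hsub ht)).1 (hw t (hsub ht)).1
      (hu0 t (hsub ht))
    rwa [hu.wronskian_eq hw hI hI'.isPreconnected (hsub ht) hx, ← mul_one_div] at h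
  have hcont : ContinuousOn (fun t => 1 / u t ^ 2) I :=
    continuousOn_const.div (hu.continuousOn.pow 2) fun t ht => pow_ne_zero 2 (hu0 t ht)
  rw [← intervalIntegral.integral_const_mul,
    intervalIntegral.integral_eq_sub_of_hasDerivAt hderiv
      ((hcont.mono hsub).intervalIntegrable.const_mul _)]
  ring

theorem singular_sturm_separation_general (a b : EReal)
    (p u w : ℝ → ℝ) (x₀ : ℝ)
    (I : Set ℝ) (hI : I = {x : ℝ | a < (x : EReal) ∧ (x : EReal) < b})
    (hx₀ : x₀ ∈ I)
    (hu : ∀ x ∈ I, HasDerivAt u (deriv u x) x ∧ HasDerivAt (deriv u) (-(p x * u x)) x)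
    (hupos : ∀ x ∈ I, 0 < u x)
    (hdiva : ∫⁻ x in I ∩ Iio x₀, ENNReal.ofReal (1 / (u x) ^ 2) = ⊤)
    (hdivb : ∫⁻ x in I ∩ Ioi x₀, ENNReal.ofReal (1 / (u x) ^ 2) = ⊤)
    (hw : ∀ x ∈ I, HasDerivAt w (deriv w x) x ∧ HasDerivAt (deriv w) (-(p x * w x)) x)
    (hindep : ∃ x ∈ I, u x * deriv w x - deriv u x * w x ≠ 0) :
    ∃ x ∈ I, w x = 0 := by
  have hIo : IsOpen I := hI ▸ isOpen_Ioo.preimage continuous_coe_real_ereal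
  have hIc : I.OrdConnected := hI ▸ ordConnected_Ioo.preimage_mono EReal.coe_strictMono.monotone
  have hu0 : ∀ x ∈ I, u x ≠ 0 := fun x hx => (hupos x hx).ne'
  set C := wronskian u w x₀
  have hC : C ≠ 0 := by
    obtain ⟨z, hz, hWz⟩ := hindep
    exact (IsSolutionOn.wronskian_eq hu hw hIo hIc.isPreconnected hx₀ hz).trans_ne hWz
  set g₀ := w x₀ / u x₀
  have hg : ∀ y ∈ I, C * (w y / u y) = C * g₀ + C ^ 2 * ∫ t in x₀..y, 1 / u t ^ 2 := fun y hy => by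
    rw [IsSolutionOn.div_eq_add_wronskian_mul_integral hu hw hIo hIc hu0 hx₀ hy]
    ring
  have hf : ContinuousOn (fun t => 1 / u t ^ 2) I :=
    continuousOn_const.div ((IsSolutionOn.continuousOn hu).pow 2) fun t ht =>
      pow_ne_zero 2 (hu0 t ht)
  have hf0 : ∀ x ∈ I, 0 ≤ 1 / u x ^ 2 := fun x _ => by positivity
  set M := |C * g₀| / C ^ 2
  have hM : ∀ T, M < T → |C * g₀| < C ^ 2 * T := fun T hT => by
    rwa [div_lt_iff₀' (by positivity)] at hT
  obtain ⟨c, hc, hMc⟩ :=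
    exists_lt_intervalIntegral_of_setLIntegral_Iio_eq_top hIo hIc hx₀ hf hf0 hdiva M
  obtain ⟨d, hd, hMd⟩ :=
    exists_lt_intervalIntegral_of_setLIntegral_Ioi_eq_top hIo hIc hx₀ hf hf0 hdivb M
  have hc_neg : C * (w c / u c) < 0 := by
    rw [hg c hc, intervalIntegral.integral_symm]
    linarith [le_abs_self (C * g₀), hM _ hMc]
  have hd_pos : 0 < C * (w d / u d) := by
    rw [hg d hd]
    linarith [neg_abs_le (C * g₀), hM _ hMd]
  have hcont : ContinuousOn (fun x => C * (w x / u x)) I :=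
    continuousOn_const.mul ((IsSolutionOn.continuousOn hw).div (IsSolutionOn.continuousOn hu) hu0)
  obtain ⟨z, hz, hz0⟩ := hIc.isPreconnected.intermediate_value hc hd hcont ⟨hc_neg.le, hd_pos.le⟩
  exact ⟨z, hz, by simpa [hC, hu0 z hz] using hz0⟩

/-- Singular Sturm separation theorem on a possibly infinite open interval. -/
theorem singular_sturm_separation (a b : EReal) (hab : a < b)
    (p u w : ℝ → ℝ) (x₀ : ℝ)
    (I : Set ℝ) (hI : I = {x : ℝ | a < (x : EReal) ∧ (x : EReal) < b})
    (hx₀ : x₀ ∈ I)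
    (hp : ContinuousOn p I)
    (hu : ∀ x ∈ I, HasDerivAt u (deriv u x) x ∧ HasDerivAt (deriv u) (-(p x * u x)) x)
    (hupos : ∀ x ∈ I, 0 < u x)
    (hdiva : ∫⁻ x in I ∩ Iio x₀, ENNReal.ofReal (1 / (u x) ^ 2) = ⊤)
    (hdivb : ∫⁻ x in I ∩ Ioi x₀, ENNReal.ofReal (1 / (u x) ^ 2) = ⊤)
    (hw : ∀ x ∈ I, HasDerivAt w (deriv w x) x ∧ HasDerivAt (deriv w) (-(p x * w x)) x)
    (hindep : ∃ x ∈ I, u x * deriv w x - deriv u x * w x ≠ 0) :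
    ∃ x ∈ I, w x = 0 :=
  singular_sturm_separation_general a b p u w x₀ I hI hx₀ hu hupos hdiva hdivb hw hindep
end

section
/- If 0 < λ < μ < 1/2, then p_μ(x) > p_λ(x) for all x ∈ (-1,1), where p_λ(x) = 4λ(1-λ)/(1-x²)², and yet the solution v₁(x) = (1-x)^μ (1+x)^{1-μ} of v'' + p_μ v = 0 is strictly positive on (-1,1); hence the conclusion of the classical Sturm comparison theorem fails between the zeros x = -1 and x = 1 of the solution u₁(x) = (1-x)^λ (1+x)^{1-λ} of u'' + p_λ u = 0. -/
open Set Real Filter Topology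

/-!
Both `u₁` and `v₁` are instances of `w_c x = (1 - x)^c (1 + x)^(1 - c)`, whose logarithmic
derivative is `g = (1 - 2c - x) / (1 - x²)`. From `w' = w g` one gets `w'' = w (g' + g²)`, and
`g' + g² = -4c(1 - c) / (1 - x²)²`, so `w_c` solves `w'' + p_c w = 0`. It vanishes at `±1` for
`0 < c < 1` but is positive in between, while `c ↦ c(1 - c)` increases on `(0, 1/2)`.
-/

theorem hasDerivAt_deriv_of_forall_hasDerivAt_mul {w g : ℝ → ℝ} {s : Set ℝ} (hs : IsOpen s)
    (hw : ∀ y ∈ s, HasDerivAt w (w y * g y) y) {x g' : ℝ} (hx : x ∈ s) (hg : HasDerivAt g g' x) :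
    HasDerivAt (deriv w) (w x * (g' + g x ^ 2)) x := by
  have hderiv : deriv w =ᶠ[𝓝 x] fun y => w y * g y := by
    filter_upwards [hs.mem_nhds hx] with y hy using (hw y hy).deriv
  refine (((hw x hx).mul hg).congr_of_eventuallyEq hderiv).congr_deriv ?_
  ring

noncomputable def sturmSolution (c : ℝ) (x : ℝ) : ℝ := (1 - x) ^ c * (1 + x) ^ (1 - c)

theorem sturmSolution_pos (c : ℝ) {x : ℝ} (hx : x ∈ Ioo (-1 : ℝ) 1) : 0 < sturmSolution c x := by
  have : 0 < 1 - x := by linarith [hx.2]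
  have : 0 < 1 + x := by linarith [hx.1]
  unfold sturmSolution
  positivity

theorem sturmSolution_neg_one {c : ℝ} (hc : c ≠ 1) : sturmSolution c (-1) = 0 := by
  simp [sturmSolution, zero_rpow (sub_ne_zero.mpr hc.symm)]

theorem sturmSolution_one {c : ℝ} (hc : c ≠ 0) : sturmSolution c 1 = 0 := by
  simp [sturmSolution, zero_rpow hc]

theorem hasDerivAt_sturmSolution (c : ℝ) {x : ℝ} (hx : x ∈ Ioo (-1 : ℝ) 1) :
    HasDerivAt (sturmSolution c) (sturmSolution c x * ((1 - 2 * c - x) / (1 - x ^ 2))) x := by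
  have h₁ : 0 < 1 - x := by linarith [hx.2]
  have h₂ : 0 < 1 + x := by linarith [hx.1]
  have hA := ((hasDerivAt_id x).const_sub 1).rpow_const (p := c) (Or.inl h₁.ne')
  have hB := ((hasDerivAt_id x).const_add 1).rpow_const (p := 1 - c) (Or.inl h₂.ne')
  refine (hA.mul hB).congr_deriv ?_
  have hsq : 1 - x ^ 2 = (1 - x) * (1 + x) := by ring
  simp only [id, rpow_sub_one h₁.ne', rpow_sub_one h₂.ne', sturmSolution, hsq]
  field_simp
  ring

theorem hasDerivAt_deriv_sturmSolution (c : ℝ) {x : ℝ} (hx : x ∈ Ioo (-1 : ℝ) 1) :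
    HasDerivAt (deriv (sturmSolution c))
      (-(4 * c * (1 - c) / (1 - x ^ 2) ^ 2 * sturmSolution c x)) x := by
  have hden : 1 - x ^ 2 ≠ 0 := by nlinarith [hx.1, hx.2]
  have hnum : HasDerivAt (fun y => 1 - 2 * c - y) (-1) x := by
    simpa using (hasDerivAt_id x).const_sub (1 - 2 * c)
  have hdenom : HasDerivAt (fun y => 1 - y ^ 2) (-(2 * x)) x := by
    simpa using (hasDerivAt_pow 2 x).const_sub 1
  refine (hasDerivAt_deriv_of_forall_hasDerivAt_mul isOpen_Ioo
    (fun y hy => hasDerivAt_sturmSolution c hy) hx (hnum.div hdenom hden)).congr_deriv ?_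
  field_simp
  ring

theorem sturmSolution_solves (c : ℝ) {x : ℝ} (hx : x ∈ Ioo (-1 : ℝ) 1) :
    HasDerivAt (sturmSolution c) (deriv (sturmSolution c) x) x ∧
      HasDerivAt (deriv (sturmSolution c))
        (-(4 * c * (1 - c) / (1 - x ^ 2) ^ 2 * sturmSolution c x)) x :=
  ⟨(hasDerivAt_sturmSolution c hx).differentiableAt.hasDerivAt,
    hasDerivAt_deriv_sturmSolution c hx⟩

/-- For `0 < λ < μ < 1/2`, `p_μ > p_λ` on `(-1,1)`, yet the solution
`v₁ = (1-x)^μ (1+x)^{1-μ}` of `v'' + p_μ v = 0` is positive on `(-1,1)`: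
the classical Sturm comparison conclusion fails between the zeros `±1` of
the solution `u₁ = (1-x)^λ (1+x)^{1-λ}` of `u'' + p_λ u = 0`. -/
theorem sturm_comparison_fails_example (l m : ℝ) (hl0 : 0 < l) (hlm : l < m) (hm : m < 1 / 2)
    (pl pm u₁ v₁ : ℝ → ℝ)
    (hpl : ∀ x, pl x = 4 * l * (1 - l) / (1 - x ^ 2) ^ 2)
    (hpm : ∀ x, pm x = 4 * m * (1 - m) / (1 - x ^ 2) ^ 2)
    (hu₁ : ∀ x, u₁ x = (1 - x) ^ l * (1 + x) ^ (1 - l))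
    (hv₁ : ∀ x, v₁ x = (1 - x) ^ m * (1 + x) ^ (1 - m)) :
    (∀ x ∈ Ioo (-1 : ℝ) 1, pl x < pm x) ∧
    (∀ x ∈ Ioo (-1 : ℝ) 1,
      HasDerivAt u₁ (deriv u₁ x) x ∧ HasDerivAt (deriv u₁) (-(pl x * u₁ x)) x) ∧
    u₁ (-1) = 0 ∧ u₁ 1 = 0 ∧
    (∀ x ∈ Ioo (-1 : ℝ) 1,
      HasDerivAt v₁ (deriv v₁ x) x ∧ HasDerivAt (deriv v₁) (-(pm x * v₁ x)) x) ∧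
    (∀ x ∈ Ioo (-1 : ℝ) 1, 0 < v₁ x) ∧
    ¬ ∃ x ∈ Ioo (-1 : ℝ) 1, v₁ x = 0 := by
  obtain rfl : u₁ = sturmSolution l := funext hu₁
  obtain rfl : v₁ = sturmSolution m := funext hv₁
  have hcoeff : 4 * l * (1 - l) < 4 * m * (1 - m) := by nlinarith
  refine ⟨fun x hx => ?_, fun x hx => ?_, sturmSolution_neg_one (by linarith),
    sturmSolution_one hl0.ne', fun x hx => ?_, fun x hx => sturmSolution_pos m hx,
    fun ⟨x, hx, hx0⟩ => (sturmSolution_pos m hx).ne' hx0⟩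
  · have : 0 < (1 - x ^ 2) ^ 2 := pow_pos (by nlinarith [hx.1, hx.2]) 2
    rw [hpl, hpm]
    gcongr
  · rw [hpl]; exact sturmSolution_solves l hx
  · rw [hpm]; exact sturmSolution_solves m hx
end

section
/- If u₁ and u₂ are two positive solutions of u'' + p u = 0 on an interval, α ∈ (0,1), and W = u₁ u₂' - u₁' u₂ is their (constant) Wronskian, then v = u₁^α u₂^{1-α} satisfies v'' + [p(x) + α(1-α) W² / (u₁² u₂²)] v = 0. -/
/-!
Write `v = u₁^α u₂^{1-α}` and `L = α u₁'/u₁ + (1-α) u₂'/u₂`, so that `v' = v L` and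
`v'' = v (L² + L')`. Each logarithmic derivative `u'/u` of a solution satisfies the Riccati
equation `(u'/u)' = -p - (u'/u)²`, hence `L² + L' = -p - α(1-α)(u₁'/u₁ - u₂'/u₂)²`, and
`u₁'/u₁ - u₂'/u₂ = -W/(u₁ u₂)`.
-/

open Set Filter Topology

theorem hasDerivAt_logDeriv {u : ℝ → ℝ} {x q : ℝ} (hu : DifferentiableAt ℝ u x)
    (hu' : HasDerivAt (deriv u) q x) (hx : u x ≠ 0) :
    HasDerivAt (logDeriv u) (q / u x - logDeriv u x ^ 2) x := by
  refine (hu'.div hu.hasDerivAt hx).congr_deriv ?_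
  rw [logDeriv_apply]
  field_simp

theorem hasDerivAt_rpow_mul_rpow {u₁ u₂ : ℝ → ℝ} {x : ℝ} (α β : ℝ)
    (hu₁ : DifferentiableAt ℝ u₁ x) (hu₂ : DifferentiableAt ℝ u₂ x)
    (pos₁ : 0 < u₁ x) (pos₂ : 0 < u₂ x) :
    HasDerivAt (fun y => u₁ y ^ α * u₂ y ^ β)
      (u₁ x ^ α * u₂ x ^ β * (α * logDeriv u₁ x + β * logDeriv u₂ x)) x := by
  refine ((hu₁.hasDerivAt.rpow_const (p := α) (Or.inl pos₁.ne')).mul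
    (hu₂.hasDerivAt.rpow_const (p := β) (Or.inl pos₂.ne'))).congr_deriv ?_
  rw [logDeriv_apply, logDeriv_apply, Real.rpow_sub_one pos₁.ne', Real.rpow_sub_one pos₂.ne']
  field_simp

theorem power_mean_of_solutions_general (a b : ℝ) (p u₁ u₂ : ℝ → ℝ) (α W : ℝ)
    (hu₁ : ∀ x ∈ Ioo a b, HasDerivAt u₁ (deriv u₁ x) x ∧
      HasDerivAt (deriv u₁) (-(p x * u₁ x)) x)
    (hu₂ : ∀ x ∈ Ioo a b, HasDerivAt u₂ (deriv u₂ x) x ∧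
      HasDerivAt (deriv u₂) (-(p x * u₂ x)) x)
    (h₁ : ∀ x ∈ Ioo a b, 0 < u₁ x) (h₂ : ∀ x ∈ Ioo a b, 0 < u₂ x)
    (hW : ∀ x ∈ Ioo a b, u₁ x * deriv u₂ x - deriv u₁ x * u₂ x = W)
    (v : ℝ → ℝ) (hv : ∀ x, v x = u₁ x ^ α * u₂ x ^ (1 - α)) :
    ∀ x ∈ Ioo a b, HasDerivAt v (deriv v x) x ∧
      HasDerivAt (deriv v)
        (-((p x + α * (1 - α) * W ^ 2 / ((u₁ x) ^ 2 * (u₂ x) ^ 2)) * v x)) x := by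
  set L : ℝ → ℝ := fun y => α * logDeriv u₁ y + (1 - α) * logDeriv u₂ y
  have hv' : ∀ y ∈ Ioo a b, HasDerivAt v (v y * L y) y := fun y hy => by
    simpa only [← hv] using hasDerivAt_rpow_mul_rpow α (1 - α) (hu₁ y hy).1.differentiableAt
      (hu₂ y hy).1.differentiableAt (h₁ y hy) (h₂ y hy)
  intro x hx
  refine ⟨(hv' x hx).differentiableAt.hasDerivAt, ?_⟩
  have hderiv : deriv v =ᶠ[𝓝 x] fun y => v y * L y :=
    eventually_of_mem (isOpen_Ioo.mem_nhds hx) fun y hy => (hv' y hy).deriv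
  have hL : HasDerivAt L (α * (-(p x * u₁ x) / u₁ x - logDeriv u₁ x ^ 2) +
      (1 - α) * (-(p x * u₂ x) / u₂ x - logDeriv u₂ x ^ 2)) x :=
    ((hasDerivAt_logDeriv (hu₁ x hx).1.differentiableAt (hu₁ x hx).2
        (h₁ x hx).ne').const_mul α).add
      ((hasDerivAt_logDeriv (hu₂ x hx).1.differentiableAt (hu₂ x hx).2
        (h₂ x hx).ne').const_mul (1 - α))
  have hWlog : W / (u₁ x * u₂ x) = logDeriv u₂ x - logDeriv u₁ x := by
    rw [← hW x hx, logDeriv_apply, logDeriv_apply]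
    field_simp [(h₁ x hx).ne', (h₂ x hx).ne']
  refine (((hv' x hx).mul hL).congr_of_eventuallyEq hderiv).congr_deriv ?_
  rw [← mul_pow, mul_div_assoc, ← div_pow, hWlog, neg_div, neg_div,
    mul_div_cancel_right₀ _ (h₁ x hx).ne', mul_div_cancel_right₀ _ (h₂ x hx).ne']
  ring

/-- If `u₁, u₂ > 0` solve `u'' + p u = 0` with constant Wronskian `W`, then
`v = u₁^α u₂^{1-α}` satisfies `v'' + (p + α(1-α) W²/(u₁² u₂²)) v = 0`. -/
theorem power_mean_of_solutions (a b : ℝ) (p u₁ u₂ : ℝ → ℝ) (α W : ℝ)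
    (hα : α ∈ Ioo (0 : ℝ) 1)
    (hu₁ : ∀ x ∈ Ioo a b, HasDerivAt u₁ (deriv u₁ x) x ∧
      HasDerivAt (deriv u₁) (-(p x * u₁ x)) x)
    (hu₂ : ∀ x ∈ Ioo a b, HasDerivAt u₂ (deriv u₂ x) x ∧
      HasDerivAt (deriv u₂) (-(p x * u₂ x)) x)
    (h₁ : ∀ x ∈ Ioo a b, 0 < u₁ x) (h₂ : ∀ x ∈ Ioo a b, 0 < u₂ x)
    (hW : ∀ x ∈ Ioo a b, u₁ x * deriv u₂ x - deriv u₁ x * u₂ x = W)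
    (v : ℝ → ℝ) (hv : ∀ x, v x = u₁ x ^ α * u₂ x ^ (1 - α)) :
    ∀ x ∈ Ioo a b, HasDerivAt v (deriv v x) x ∧
      HasDerivAt (deriv v)
        (-((p x + α * (1 - α) * W ^ 2 / ((u₁ x) ^ 2 * (u₂ x) ^ 2)) * v x)) x :=
  power_mean_of_solutions_general a b p u₁ u₂ α W hu₁ hu₂ h₁ h₂ hW v hv
end

section
/- Let u > 0 be a solution of u'' + p u = 0 on (a,b) such that both L₁ = ∫_a^{x₀} dt/u² and L₂ = ∫_{x₀}^b dt/u² are finite. Define f(x) = ∫_{x₀}^x dt/u² and P(x) = p(x) + (π²/(L₁+L₂)²) f'(x)². Then P(x) > p(x) on (a,b) and the equation v'' + P v = 0 has a solution that is positive on (a,b). -/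
open MeasureTheory Set intervalIntegral Real
open Filter Topology

/-!
Since `f' = 1/u² > 0`, the primitive `f` increases on `I` and, both boundary integrals being finite,
takes values in `(-L₁, L₂)`; so `θ = π (f + L₁) / (L₁ + L₂)` takes values in `(0, π)`.
Whenever `θ' = k / u²`, the function `v = u sin θ` satisfies `v'' + (p + θ'²) v = 0`: the terms
in `u' θ'` cancel because `u² θ'` is constant. With this `θ`, `p + θ'²` is exactly `P`, and
`v = u sin θ` is positive.
-/

section SineTransform

variable {p u θ : ℝ → ℝ} {k x : ℝ}

theorem hasDerivAt_mul_sin (hu : HasDerivAt u (deriv u x) x) (hθ : HasDerivAt θ (k / u x ^ 2) x)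
    (hux : u x ≠ 0) :
    HasDerivAt (fun y => u y * sin (θ y)) (deriv u x * sin (θ x) + k * cos (θ x) / u x) x := by
  refine (hu.mul hθ.sin).congr_deriv ?_
  field_simp

theorem hasDerivAt_deriv_mul_sin {U : Set ℝ} (hU : IsOpen U)
    (hu : ∀ y ∈ U, HasDerivAt u (deriv u y) y ∧ HasDerivAt (deriv u) (-(p y * u y)) y)
    (hθ : ∀ y ∈ U, HasDerivAt θ (k / u y ^ 2) y) (hune : ∀ y ∈ U, u y ≠ 0) (hx : x ∈ U) :
    HasDerivAt (deriv fun y => u y * sin (θ y))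
      (-((p x + (k / u x ^ 2) ^ 2) * (u x * sin (θ x)))) x := by
  have hderiv : deriv (fun y => u y * sin (θ y)) =ᶠ[𝓝 x]
      fun y => deriv u y * sin (θ y) + k * cos (θ y) / u y :=
    eventually_of_mem (hU.mem_nhds hx) fun y hy =>
      (hasDerivAt_mul_sin (hu y hy).1 (hθ y hy) (hune y hy)).deriv
  have hux := hune x hx
  refine ((((hu x hx).2.mul (hθ x hx).sin).add
    (((hθ x hx).cos.const_mul k).div (hu x hx).1 hux)).congr_of_eventuallyEq hderiv).congr_deriv ?_
  field_simp
  ring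

end SineTransform

section Primitive

variable {q : ℝ → ℝ} {I : Set ℝ} {x₀ x : ℝ}

theorem hasDerivAt_integral_of_continuousOn (hIo : IsOpen I) (hIc : I.OrdConnected)
    (hq : ContinuousOn q I) (hx₀ : x₀ ∈ I) (hx : x ∈ I) :
    HasDerivAt (fun y => ∫ t in x₀..y, q t) (q x) x :=
  integral_hasDerivAt_right (hq.mono (hIc.uIcc_subset hx₀ hx)).intervalIntegrable
    (hq.stronglyMeasurableAtFilter hIo x hx) (hq.continuousAt (hIo.mem_nhds hx))

theorem strictMonoOn_integral_of_pos (hIo : IsOpen I) (hIc : I.OrdConnected)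
    (hq : ContinuousOn q I) (hqpos : ∀ t ∈ I, 0 < q t) (hx₀ : x₀ ∈ I) :
    StrictMonoOn (fun y => ∫ t in x₀..y, q t) I := by
  have hd := fun y (hy : y ∈ I) => hasDerivAt_integral_of_continuousOn hIo hIc hq hx₀ hy
  refine strictMonoOn_of_deriv_pos hIc.convex (fun y hy => (hd y hy).continuousAt.continuousWithinAt)
    fun y hy => ?_
  rw [hIo.interior_eq] at hy
  exact (hd y hy).deriv ▸ hqpos y hy

theorem integral_le_toReal_setLIntegral {s : Set ℝ} {a b : ℝ} (hab : a ≤ b) (hsub : Ioo a b ⊆ s)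
    (hq : AEStronglyMeasurable q (volume.restrict (Ioo a b))) (hqnn : ∀ t ∈ Ioo a b, 0 ≤ q t)
    (hfin : ∫⁻ t in s, ENNReal.ofReal (q t) ≠ ⊤) :
    ∫ t in a..b, q t ≤ (∫⁻ t in s, ENNReal.ofReal (q t)).toReal := by
  rw [integral_of_le hab, integral_Ioc_eq_integral_Ioo,
    integral_eq_lintegral_of_nonneg_ae (ae_restrict_of_forall_mem measurableSet_Ioo hqnn) hq]
  exact ENNReal.toReal_mono hfin (lintegral_mono_set hsub)

theorem integral_lt_toReal_setLIntegral_Ioi (hIo : IsOpen I) (hIc : I.OrdConnected)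
    (hq : ContinuousOn q I) (hqpos : ∀ t ∈ I, 0 < q t) (hx₀ : x₀ ∈ I)
    (hfin : ∫⁻ t in I ∩ Ioi x₀, ENNReal.ofReal (q t) ≠ ⊤) (hx : x ∈ I) :
    ∫ t in x₀..x, q t < (∫⁻ t in I ∩ Ioi x₀, ENNReal.ofReal (q t)).toReal := by
  obtain ⟨y, hxy, hy⟩ := ((frequently_gt_nhds x).and_eventually (hIo.mem_nhds hx)).exists
  have hz : max y x₀ ∈ I := by
    rcases max_choice y x₀ with h | h <;> rw [h] <;> assumption
  have hsub : Ioo x₀ (max y x₀) ⊆ I ∩ Ioi x₀ := fun t ht =>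
    ⟨hIc.out hx₀ hz (Ioo_subset_Icc_self ht), ht.1⟩
  calc ∫ t in x₀..x, q t < ∫ t in x₀..max y x₀, q t :=
        strictMonoOn_integral_of_pos hIo hIc hq hqpos hx₀ hx hz (hxy.trans_le (le_max_left _ _))
    _ ≤ _ := integral_le_toReal_setLIntegral (le_max_right _ _) hsub
        ((hq.mono (hsub.trans inter_subset_left)).aestronglyMeasurable measurableSet_Ioo)
        (fun t ht => (hqpos t (hsub ht).1).le) hfin

theorem neg_toReal_setLIntegral_Iio_lt_integral (hIo : IsOpen I) (hIc : I.OrdConnected)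
    (hq : ContinuousOn q I) (hqpos : ∀ t ∈ I, 0 < q t) (hx₀ : x₀ ∈ I)
    (hfin : ∫⁻ t in I ∩ Iio x₀, ENNReal.ofReal (q t) ≠ ⊤) (hx : x ∈ I) :
    -(∫⁻ t in I ∩ Iio x₀, ENNReal.ofReal (q t)).toReal < ∫ t in x₀..x, q t := by
  obtain ⟨y, hyx, hy⟩ := ((frequently_lt_nhds x).and_eventually (hIo.mem_nhds hx)).exists
  have hz : min y x₀ ∈ I := by
    rcases min_choice y x₀ with h | h <;> rw [h] <;> assumption
  have hsub : Ioo (min y x₀) x₀ ⊆ I ∩ Iio x₀ := fun t ht =>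
    ⟨hIc.out hz hx₀ (Ioo_subset_Icc_self ht), ht.2⟩
  calc -(∫⁻ t in I ∩ Iio x₀, ENNReal.ofReal (q t)).toReal ≤ ∫ t in x₀..min y x₀, q t := by
        rw [integral_symm, neg_le_neg_iff]
        exact integral_le_toReal_setLIntegral (min_le_right _ _) hsub
          ((hq.mono (hsub.trans inter_subset_left)).aestronglyMeasurable measurableSet_Ioo)
          (fun t ht => (hqpos t (hsub ht).1).le) hfin
    _ < ∫ t in x₀..x, q t :=
        strictMonoOn_integral_of_pos hIo hIc hq hqpos hx₀ hz hx ((min_le_left _ _).trans_lt hyx)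

theorem integral_mem_Ioo_of_setLIntegral_eq {L₁ L₂ : ℝ} (hIo : IsOpen I) (hIc : I.OrdConnected)
    (hq : ContinuousOn q I) (hqpos : ∀ t ∈ I, 0 < q t) (hx₀ : x₀ ∈ I)
    (hL₁ : ∫⁻ t in I ∩ Iio x₀, ENNReal.ofReal (q t) = ENNReal.ofReal L₁)
    (hL₂ : ∫⁻ t in I ∩ Ioi x₀, ENNReal.ofReal (q t) = ENNReal.ofReal L₂) (hx : x ∈ I) :
    ∫ t in x₀..x, q t ∈ Ioo (-L₁) L₂ := by
  have hub y (hy : y ∈ I) := integral_lt_toReal_setLIntegral_Ioi hIo hIc hq hqpos hx₀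
    (hL₂ ▸ ENNReal.ofReal_ne_top) hy
  have hlb y (hy : y ∈ I) := neg_toReal_setLIntegral_Iio_lt_integral hIo hIc hq hqpos hx₀
    (hL₁ ▸ ENNReal.ofReal_ne_top) hy
  simp only [hL₁, hL₂, ENNReal.toReal_ofReal'] at hub hlb
  have hL₁pos : 0 < L₁ := by simpa using hlb x₀ hx₀
  have hL₂pos : 0 < L₂ := by simpa using hub x₀ hx₀
  rw [max_eq_left hL₁pos.le] at hlb
  rw [max_eq_left hL₂pos.le] at hub
  exact ⟨hlb x hx, hub x hx⟩

end Primitive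

theorem sin_pi_mul_add_div_add_pos {y L₁ L₂ : ℝ} (hy : y ∈ Ioo (-L₁) L₂) :
    0 < sin (π * (y + L₁) / (L₁ + L₂)) := by
  have hL : 0 < L₁ + L₂ := by linarith [hy.1, hy.2]
  refine sin_pos_of_pos_of_lt_pi (div_pos (mul_pos pi_pos (by linarith [hy.1])) hL) ?_
  rw [div_lt_iff₀ hL]
  exact mul_lt_mul_of_pos_left (by linarith [hy.2]) pi_pos

theorem comparison_fails_both_finite_general (a b : EReal)
    (p u : ℝ → ℝ) (x₀ L₁ L₂ : ℝ)
    (I : Set ℝ) (hI : I = {x : ℝ | a < (x : EReal) ∧ (x : EReal) < b})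
    (hx₀ : x₀ ∈ I)
    (hu : ∀ x ∈ I, HasDerivAt u (deriv u x) x ∧ HasDerivAt (deriv u) (-(p x * u x)) x)
    (hupos : ∀ x ∈ I, 0 < u x)
    (hL₁ : ∫⁻ x in I ∩ Iio x₀, ENNReal.ofReal (1 / (u x) ^ 2) = ENNReal.ofReal L₁)
    (hL₂ : ∫⁻ x in I ∩ Ioi x₀, ENNReal.ofReal (1 / (u x) ^ 2) = ENNReal.ofReal L₂)
    (f P : ℝ → ℝ)
    (hf : ∀ x, f x = ∫ t in x₀..x, 1 / (u t) ^ 2)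
    (hPdef : ∀ x, P x = p x + π ^ 2 / (L₁ + L₂) ^ 2 * (deriv f x) ^ 2) :
    (∀ x ∈ I, p x < P x) ∧
    ∃ v : ℝ → ℝ,
      (∀ x ∈ I, HasDerivAt v (deriv v x) x ∧ HasDerivAt (deriv v) (-(P x * v x)) x) ∧
      ∀ x ∈ I, 0 < v x := by
  obtain rfl : f = fun x => ∫ t in x₀..x, 1 / (u t) ^ 2 := funext hf
  have hIo : IsOpen I := hI ▸ isOpen_Ioo.preimage continuous_coe_real_ereal
  have hIc : I.OrdConnected := hI ▸ ordConnected_Ioo.preimage_mono EReal.coe_strictMono.monotone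
  have hqc : ContinuousOn (fun t => 1 / u t ^ 2) I :=
    continuousOn_const.div (fun x hx => (hu x hx).1.continuousAt.continuousWithinAt |>.pow 2)
      fun x hx => pow_ne_zero 2 (hupos x hx).ne'
  have hqpos : ∀ x ∈ I, 0 < 1 / u x ^ 2 := fun x hx => by have := hupos x hx; positivity
  have hfd x (hx : x ∈ I) := hasDerivAt_integral_of_continuousOn hIo hIc hqc hx₀ hx
  have hbound x (hx : x ∈ I) :=
    integral_mem_Ioo_of_setLIntegral_eq hIo hIc hqc hqpos hx₀ hL₁ hL₂ hx
  have hLpos : 0 < L₁ + L₂ := by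
    have h := hbound x₀ hx₀
    simp only [integral_same, mem_Ioo] at h
    linarith
  have hθ x (hx : x ∈ I) : HasDerivAt (fun y => π * ((∫ t in x₀..y, 1 / u t ^ 2) + L₁) / (L₁ + L₂))
      (π / (L₁ + L₂) / u x ^ 2) x :=
    ((((hfd x hx).add_const L₁).const_mul π).div_const (L₁ + L₂)).congr_deriv (by ring)
  refine ⟨fun x hx => ?_, fun x => u x * sin (π * ((∫ t in x₀..x, 1 / u t ^ 2) + L₁) / (L₁ + L₂)),
    fun x hx => ⟨?_, ?_⟩, fun x hx => ?_⟩
  · rw [hPdef, (hfd x hx).deriv, lt_add_iff_pos_right]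
    exact mul_pos (div_pos (pow_pos pi_pos 2) (pow_pos hLpos 2)) (pow_pos (hqpos x hx) 2)
  · exact (hasDerivAt_mul_sin (hu x hx).1 (hθ x hx) (hupos x hx).ne').differentiableAt.hasDerivAt
  · refine (hasDerivAt_deriv_mul_sin hIo hu hθ (fun y hy => (hupos y hy).ne') hx).congr_deriv ?_
    rw [hPdef, (hfd x hx).deriv]
    dsimp only
    -- an atom `L`, so that `ring` does not expand `(L₁ + L₂) ^ 2` under the inverse
    generalize L₁ + L₂ = L
    ring
  · exact mul_pos (hupos x hx) (sin_pi_mul_add_div_add_pos (hbound x hx))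

/-- If both boundary integrals `L₁, L₂` of `1/u²` are finite, then
`P = p + (π²/(L₁+L₂)²) f'²` satisfies `P > p` and `v'' + P v = 0` has a positive solution. -/
theorem comparison_fails_both_finite (a b : EReal) (hab : a < b)
    (p u : ℝ → ℝ) (x₀ L₁ L₂ : ℝ)
    (I : Set ℝ) (hI : I = {x : ℝ | a < (x : EReal) ∧ (x : EReal) < b})
    (hx₀ : x₀ ∈ I)
    (hp : ContinuousOn p I)
    (hu : ∀ x ∈ I, HasDerivAt u (deriv u x) x ∧ HasDerivAt (deriv u) (-(p x * u x)) x)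
    (hupos : ∀ x ∈ I, 0 < u x)
    (hL₁ : ∫⁻ x in I ∩ Iio x₀, ENNReal.ofReal (1 / (u x) ^ 2) = ENNReal.ofReal L₁)
    (hL₂ : ∫⁻ x in I ∩ Ioi x₀, ENNReal.ofReal (1 / (u x) ^ 2) = ENNReal.ofReal L₂)
    (f P : ℝ → ℝ)
    (hf : ∀ x, f x = ∫ t in x₀..x, 1 / (u t) ^ 2)
    (hPdef : ∀ x, P x = p x + π ^ 2 / (L₁ + L₂) ^ 2 * (deriv f x) ^ 2) :
    (∀ x ∈ I, p x < P x) ∧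
    ∃ v : ℝ → ℝ,
      (∀ x ∈ I, HasDerivAt v (deriv v x) x ∧ HasDerivAt (deriv v) (-(P x * v x)) x) ∧
      ∀ x ∈ I, 0 < v x :=
  comparison_fails_both_finite_general a b p u x₀ L₁ L₂ I hI hx₀ hu hupos hL₁ hL₂ f P hf hPdef
end

section
/- Let u be a positive solution of u'' + p u = 0 and v a positive solution of v'' + P v = 0 on (a,b), with P(x) ≥ p(x). Let F(x) = ∫_{x₀}^x dt/u²(t) and let F⁻¹ denote its inverse. Then the function w = (v/u) ∘ F⁻¹ is concave on the range of F. -/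
/-!
With `W = v' u - u' v` (the Wronskian), `W' = (p - P) u v ≤ 0`, so `W` is antitone, and
`(v / u)' = W / u² = W F'`. By Cauchy's mean value theorem every secant slope of `v / u`
against `F` equals a value of `W`, so these slopes decrease from left to right; since `F` is a
strictly increasing reparametrisation, this is exactly the concavity of `(v / u) ∘ F⁻¹`.
-/

open Set intervalIntegral

theorem hasDerivAt_integral_of_continuousOn_s19 {s : Set ℝ} {g : ℝ → ℝ} {x₀ x : ℝ}
    (hs : IsOpen s) (hs' : s.OrdConnected) (hg : ContinuousOn g s) (hx₀ : x₀ ∈ s)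
    (hx : x ∈ s) : HasDerivAt (fun y => ∫ t in x₀..y, g t) (g x) x :=
  integral_hasDerivAt_right ((hg.mono (hs'.uIcc_subset hx₀ hx)).intervalIntegrable)
    (hg.stronglyMeasurableAtFilter hs x hx) (hg.continuousAt (hs.mem_nhds hx))

theorem hasDerivAt_deriv_mul_sub_deriv_mul {u v : ℝ → ℝ} {p P x : ℝ}
    (hu : HasDerivAt u (deriv u x) x) (hu' : HasDerivAt (deriv u) (-(p * u x)) x)
    (hv : HasDerivAt v (deriv v x) x) (hv' : HasDerivAt (deriv v) (-(P * v x)) x) :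
    HasDerivAt (fun y => deriv v y * u y - deriv u y * v y) ((p - P) * (u x * v x)) x :=
  ((hv'.mul hu).sub (hu'.mul hv)).congr_deriv (by ring)

theorem antitoneOn_deriv_mul_sub_deriv_mul {s : Set ℝ} {p P u v : ℝ → ℝ} (hs : Convex ℝ s)
    (hPp : ∀ x ∈ s, p x ≤ P x)
    (hu : ∀ x ∈ s, HasDerivAt u (deriv u x) x ∧ HasDerivAt (deriv u) (-(p x * u x)) x)
    (hv : ∀ x ∈ s, HasDerivAt v (deriv v x) x ∧ HasDerivAt (deriv v) (-(P x * v x)) x)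
    (hupos : ∀ x ∈ s, 0 < u x) (hvpos : ∀ x ∈ s, 0 < v x) :
    AntitoneOn (fun y => deriv v y * u y - deriv u y * v y) s := by
  have hW : ∀ x ∈ s, HasDerivAt (fun y => deriv v y * u y - deriv u y * v y)
      ((p x - P x) * (u x * v x)) x := fun x hx =>
    hasDerivAt_deriv_mul_sub_deriv_mul (hu x hx).1 (hu x hx).2 (hv x hx).1 (hv x hx).2
  refine antitoneOn_of_hasDerivWithinAt_nonpos hs
    (fun x hx => (hW x hx).continuousAt.continuousWithinAt)
    (fun x hx => (hW x (interior_subset hx)).hasDerivWithinAt) fun x hx => ?_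
  replace hx := interior_subset hx
  exact mul_nonpos_of_nonpos_of_nonneg (sub_nonpos.mpr (hPp x hx))
    (mul_pos (hupos x hx) (hvpos x hx)).le

section SlopeAgainstReparametrisation

variable {s : Set ℝ} {F r f W : ℝ → ℝ}

theorem strictMonoOn_of_hasDerivAt_pos (hs : Convex ℝ s) (hF : ∀ x ∈ s, HasDerivAt F (f x) x)
    (hf : ∀ x ∈ s, 0 < f x) : StrictMonoOn F s :=
  strictMonoOn_of_hasDerivWithinAt_pos hs
    (fun x hx => (hF x hx).continuousAt.continuousWithinAt)
    (fun x hx => (hF x (interior_subset hx)).hasDerivWithinAt)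
    (fun x hx => hf x (interior_subset hx))

theorem exists_mem_Ioo_div_sub_eq_of_hasDerivAt_mul (hs : Convex ℝ s)
    (hF : ∀ x ∈ s, HasDerivAt F (f x) x) (hf : ∀ x ∈ s, 0 < f x)
    (hr : ∀ x ∈ s, HasDerivAt r (W x * f x) x) {x y : ℝ} (hx : x ∈ s) (hy : y ∈ s)
    (hxy : x < y) : ∃ c ∈ Ioo x y, (r y - r x) / (F y - F x) = W c := by
  have hIcc : Icc x y ⊆ s := hs.ordConnected.out hx hy
  have hIoo : Ioo x y ⊆ s := Ioo_subset_Icc_self.trans hIcc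
  obtain ⟨c, hc, hcauchy⟩ := exists_ratio_hasDerivAt_eq_ratio_slope r (fun z => W z * f z) hxy
    (fun z hz => (hr z (hIcc hz)).continuousAt.continuousWithinAt)
    (fun z hz => hr z (hIoo hz)) F f
    (fun z hz => (hF z (hIcc hz)).continuousAt.continuousWithinAt)
    (fun z hz => hF z (hIoo hz))
  have hFxy : 0 < F y - F x := sub_pos.mpr (strictMonoOn_of_hasDerivAt_pos hs hF hf hx hy hxy)
  have hslope : (F y - F x) * W c = r y - r x := by
    refine mul_right_cancel₀ (hf c (hIoo hc)).ne' ?_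
    rw [mul_assoc, hcauchy]
  exact ⟨c, hc, by rw [← hslope, mul_div_cancel_left₀ _ hFxy.ne']⟩

theorem concaveOn_image_comp_of_hasDerivAt_mul {G : ℝ → ℝ} (hs : Convex ℝ s)
    (hF : ∀ x ∈ s, HasDerivAt F (f x) x) (hf : ∀ x ∈ s, 0 < f x)
    (hr : ∀ x ∈ s, HasDerivAt r (W x * f x) x) (hW : AntitoneOn W s) (hG : LeftInvOn G F s) :
    ConcaveOn ℝ (F '' s) (fun y => r (G y)) := by
  have hFmono := strictMonoOn_of_hasDerivAt_pos hs hF hf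
  have hFs : Convex ℝ (F '' s) := Real.convex_iff_isPreconnected.mpr <|
    hs.isPreconnected.image F fun x hx => (hF x hx).continuousAt.continuousWithinAt
  refine concaveOn_of_slope_anti_adjacent hFs ?_
  rintro _ y₂ _ ⟨x₁, hx₁, rfl⟩ ⟨x₃, hx₃, rfl⟩ h₁₂ h₂₃
  obtain ⟨x₂, hx₂, rfl⟩ := hFs.ordConnected.out (mem_image_of_mem F hx₁)
    (mem_image_of_mem F hx₃) ⟨h₁₂.le, h₂₃.le⟩
  rw [hG hx₁, hG hx₂, hG hx₃]
  obtain ⟨c₁, hc₁, hslope₁⟩ := exists_mem_Ioo_div_sub_eq_of_hasDerivAt_mul hs hF hf hr hx₁ hx₂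
    ((hFmono.lt_iff_lt hx₁ hx₂).mp h₁₂)
  obtain ⟨c₂, hc₂, hslope₂⟩ := exists_mem_Ioo_div_sub_eq_of_hasDerivAt_mul hs hF hf hr hx₂ hx₃
    ((hFmono.lt_iff_lt hx₂ hx₃).mp h₂₃)
  rw [hslope₁, hslope₂]
  exact hW (hs.ordConnected.out hx₁ hx₂ (Ioo_subset_Icc_self hc₁))
    (hs.ordConnected.out hx₂ hx₃ (Ioo_subset_Icc_self hc₂)) (hc₁.2.trans hc₂.1).le

end SlopeAgainstReparametrisation

theorem relative_convexity_general (a b x₀ : ℝ) (hx₀ : x₀ ∈ Ioo a b)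
    (p P u v : ℝ → ℝ)
    (hPp : ∀ x ∈ Ioo a b, p x ≤ P x)
    (hu : ∀ x ∈ Ioo a b, HasDerivAt u (deriv u x) x ∧
      HasDerivAt (deriv u) (-(p x * u x)) x)
    (hv : ∀ x ∈ Ioo a b, HasDerivAt v (deriv v x) x ∧
      HasDerivAt (deriv v) (-(P x * v x)) x)
    (hupos : ∀ x ∈ Ioo a b, 0 < u x) (hvpos : ∀ x ∈ Ioo a b, 0 < v x)
    (F G : ℝ → ℝ)
    (hF : ∀ x, F x = ∫ t in x₀..x, 1 / (u t) ^ 2)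
    (hG : ∀ x ∈ Ioo a b, G (F x) = x) :
    ConcaveOn ℝ (F '' Ioo a b) (fun y => v (G y) / u (G y)) := by
  have hF' : ∀ x ∈ Ioo a b, HasDerivAt F (1 / u x ^ 2) x := fun x hx => by
    rw [funext hF]
    refine hasDerivAt_integral_of_continuousOn_s19 isOpen_Ioo ordConnected_Ioo ?_ hx₀ hx
    have hucont : ContinuousOn u (Ioo a b) := fun y hy =>
      (hu y hy).1.continuousAt.continuousWithinAt
    exact continuousOn_const.div (hucont.pow 2) fun y hy => pow_ne_zero 2 (hupos y hy).ne'
  have hr : ∀ x ∈ Ioo a b, HasDerivAt (fun y => v y / u y)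
      ((deriv v x * u x - deriv u x * v x) * (1 / u x ^ 2)) x := fun x hx =>
    ((hv x hx).1.fun_div (hu x hx).1 (hupos x hx).ne').congr_deriv (by ring)
  exact concaveOn_image_comp_of_hasDerivAt_mul (convex_Ioo a b) hF'
    (fun x hx => by have := hupos x hx; positivity) hr
    (antitoneOn_deriv_mul_sub_deriv_mul (convex_Ioo a b) hPp hu hv hupos hvpos) hG

/-- Relative convexity lemma (Chuaqui–Duren–Osgood): if `u, v > 0` solve `u'' + p u = 0`
and `v'' + P v = 0` with `P ≥ p`, and `F(x) = ∫_{x₀}^x dt/u²` with inverse `G`, then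
`(v/u) ∘ F⁻¹` is concave on the range of `F`. -/
theorem relative_convexity (a b x₀ : ℝ) (hx₀ : x₀ ∈ Ioo a b)
    (p P u v : ℝ → ℝ)
    (hp : ContinuousOn p (Ioo a b)) (hP : ContinuousOn P (Ioo a b))
    (hPp : ∀ x ∈ Ioo a b, p x ≤ P x)
    (hu : ∀ x ∈ Ioo a b, HasDerivAt u (deriv u x) x ∧
      HasDerivAt (deriv u) (-(p x * u x)) x)
    (hv : ∀ x ∈ Ioo a b, HasDerivAt v (deriv v x) x ∧
      HasDerivAt (deriv v) (-(P x * v x)) x)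
    (hupos : ∀ x ∈ Ioo a b, 0 < u x) (hvpos : ∀ x ∈ Ioo a b, 0 < v x)
    (F G : ℝ → ℝ)
    (hF : ∀ x, F x = ∫ t in x₀..x, 1 / (u t) ^ 2)
    (hG : ∀ x ∈ Ioo a b, G (F x) = x) :
    ConcaveOn ℝ (F '' Ioo a b) (fun y => v (G y) / u (G y)) :=
  relative_convexity_general a b x₀ hx₀ p P u v hPp hu hv hupos hvpos F G hF hG
end
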